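/- Let Pd, Pf, p1 ∈ ℝ and π0, π1 ∈ ℝ with π0 + π1 = 1. Define κ10 = (1−Pf)p1 + Pf(1−p1), κ00 = 1 − κ10, κ11 = (1−Pd)p1 + Pd(1−p1), κ01 = 1 − κ11, P_HH = 2π0·Pf(1−Pf) + 2π1·Pd(1−Pd), and P_BH = π0(κ10(1−Pf) + κ00·Pf) + π1(κ11(1−Pd) + κ01·Pd). Then P_BH − P_HH = p1(π0(1−2Pf)² + π1(1−2Pd)²). -/

import Mathlib

/-!
Conditioned on the hypothesis, an honest node reports 1 with probability `q` (`Pd` or `Pf`) and a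
Byzantine node with probability `flipProb p₁ q`. Flipping moves that probability towards `1/2`
linearly, `flipProb p q - q = p (1 - 2q)`, and disagreement with an honest node is affine in it
with slope `1 - 2q`; so under each hypothesis the extra disagreement is `p₁ (1 - 2q)²`, and the
priors just average these two excesses.
-/

/-- Probability of reporting 1 for a node that reports 1 with probability `q` and then flips its
report with probability `p`. -/
def flipProb (p q : ℝ) : ℝ := (1 - q) * p + q * (1 - p)

/-- Probability that two independent binary reports, equal to 1 with probabilities `a` and `b`,
differ. -/
def disagreeProb (a b : ℝ) : ℝ := a * (1 - b) + (1 - a) * b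

theorem disagreeProb_self (q : ℝ) : disagreeProb q q = 2 * q * (1 - q) := by
  unfold disagreeProb; ring

theorem flipProb_sub (p q : ℝ) : flipProb p q - q = p * (1 - 2 * q) := by
  unfold flipProb; ring

theorem disagreeProb_sub_disagreeProb (a a' b : ℝ) :
    disagreeProb a b - disagreeProb a' b = (a - a') * (1 - 2 * b) := by
  unfold disagreeProb; ring

theorem disagreeProb_flipProb_sub_disagreeProb_self (p q : ℝ) :
    disagreeProb (flipProb p q) q - disagreeProb q q = p * (1 - 2 * q) ^ 2 := by
  rw [disagreeProb_sub_disagreeProb, flipProb_sub]; ring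

theorem pbh_minus_phh_general
    (Pd Pf p1 π0 π1 : ℝ)
    (κ10 κ00 κ11 κ01 PHH PBH : ℝ)
    (hκ10 : κ10 = (1-Pf)*p1 + Pf*(1-p1))
    (hκ00 : κ00 = 1 - κ10)
    (hκ11 : κ11 = (1-Pd)*p1 + Pd*(1-p1))
    (hκ01 : κ01 = 1 - κ11)
    (hPHH : PHH = 2*π0*Pf*(1-Pf) + 2*π1*Pd*(1-Pd))
    (hPBH : PBH = π0*(κ10*(1-Pf) + κ00*Pf) + π1*(κ11*(1-Pd) + κ01*Pd)) :
    PBH - PHH = p1 * (π0*(1-2*Pf)^2 + π1*(1-2*Pd)^2) := by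
  have hPHH' : PHH = π0 * disagreeProb Pf Pf + π1 * disagreeProb Pd Pd := by
    rw [hPHH, disagreeProb_self, disagreeProb_self]; ring
  have hPBH' : PBH =
      π0 * disagreeProb (flipProb p1 Pf) Pf + π1 * disagreeProb (flipProb p1 Pd) Pd := by
    rw [hPBH, hκ00, hκ01, hκ10, hκ11]; unfold disagreeProb flipProb; ring
  rw [hPHH', hPBH']
  linear_combination π0 * disagreeProb_flipProb_sub_disagreeProb_self p1 Pf +
    π1 * disagreeProb_flipProb_sub_disagreeProb_self p1 Pd

/-- Algebraic identity: `P_BH − P_HH = p1(π0(1−2Pf)² + π1(1−2Pd)²)`. -/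
theorem pbh_minus_phh
    (Pd Pf p1 π0 π1 : ℝ) (hπ : π0 + π1 = 1)
    (κ10 κ00 κ11 κ01 PHH PBH : ℝ)
    (hκ10 : κ10 = (1-Pf)*p1 + Pf*(1-p1))
    (hκ00 : κ00 = 1 - κ10)
    (hκ11 : κ11 = (1-Pd)*p1 + Pd*(1-p1))
    (hκ01 : κ01 = 1 - κ11)
    (hPHH : PHH = 2*π0*Pf*(1-Pf) + 2*π1*Pd*(1-Pd))
    (hPBH : PBH = π0*(κ10*(1-Pf) + κ00*Pf) + π1*(κ11*(1-Pd) + κ01*Pd)) :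
    PBH - PHH = p1 * (π0*(1-2*Pf)^2 + π1*(1-2*Pd)^2) :=
  pbh_minus_phh_general Pd Pf p1 π0 π1 κ10 κ00 κ11 κ01 PHH PBH hκ10 hκ00 hκ11 hκ01 hPHH hPBH
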